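/- arXiv:2205.11621 — 4 statements merged into one kernel-verified Lean document; each statement's English description precedes it below -/
import Mathlib

section
/- If G is a connected graph on at least three vertices with an exact r-coloring c where r ≥ 3, then there exists a subgraph G' of G on which at least three colors appear, where G' is either an isometric path or a triangle C_3. -/
open SimpleGraph

/-- A rainbow 3-AP in `G` under coloring `c`: three vertices with
`d(v₁,v₂) = d(v₂,v₃)` receiving pairwise distinct colors. -/
def HasRainbow3AP {V C : Type*} (G : SimpleGraph V) (c : V → C) : Prop :=
  ∃ v₁ v₂ v₃ : V, G.dist v₁ v₂ = G.dist v₂ v₃ ∧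
    c v₁ ≠ c v₂ ∧ c v₂ ≠ c v₃ ∧ c v₁ ≠ c v₃

/-- The anti-van der Waerden number `aw(G,3)`: the least positive `r` such that
every surjective coloring with `r` colors yields a rainbow 3-AP. -/
noncomputable def aw {V : Type*} (G : SimpleGraph V) : ℕ :=
  sInf {r : ℕ | 0 < r ∧ ∀ c : V → Fin r, Function.Surjective c → HasRainbow3AP G c}

private lemma exists_adj_ne_aux {V C : Type*} {G : SimpleGraph V} (c : V → C) {u v : V}
    (W : G.Walk u v) : c u ≠ c v → ∃ x y, G.Adj x y ∧ c x ≠ c y := by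
  induction W with
  | nil => intro h; exact absurd rfl h
  | cons hab W ih =>
    rename_i a b z
    intro h
    by_cases h2 : c a = c b
    · exact ih (fun hbz => h (h2.trans hbz))
    · exact ⟨a, b, hab, h2⟩

theorem stmt_2 {V : Type*} [Fintype V] [DecidableEq V] (G : SimpleGraph V)
    (hconn : G.Connected) (hcard : 3 ≤ Fintype.card V)
    (r : ℕ) (hr : 3 ≤ r) (c : V → Fin r) (hc : Function.Surjective c) :
    (∃ (u v : V) (P : G.Walk u v), P.IsPath ∧ P.length = G.dist u v ∧
      3 ≤ (P.support.toFinset.image c).card) ∨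
    (∃ a b d : V, G.Adj a b ∧ G.Adj b d ∧ G.Adj d a ∧
      c a ≠ c b ∧ c b ≠ c d ∧ c a ≠ c d) := by
  by_contra hcon
  push_neg at hcon
  obtain ⟨hgeo, htri⟩ := hcon
  -- any three distinct colors in a finset force card ≥ 3
  have card3 : ∀ (s : Finset (Fin r)) (x y z : Fin r), x ∈ s → y ∈ s → z ∈ s →
      x ≠ y → x ≠ z → y ≠ z → 3 ≤ s.card := by
    intro s x y z hx hy hz h1 h2 h3
    have hsub : ({x, y, z} : Finset (Fin r)) ⊆ s := by
      intro t ht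
      simp only [Finset.mem_insert, Finset.mem_singleton] at ht
      rcases ht with rfl | rfl | rfl <;> assumption
    have hcard : ({x, y, z} : Finset (Fin r)).card = 3 :=
      Finset.card_eq_three.mpr ⟨x, y, z, h1, h2, h3, rfl⟩
    exact hcard ▸ Finset.card_le_card hsub
  -- on a geodesic with differently colored endpoints, only the two end colors occur
  have geo2 : ∀ (u v : V) (P : G.Walk u v), P.length = G.dist u v → c u ≠ c v →
      ∀ w ∈ P.support, c w = c u ∨ c w = c v := by
    intro u v P hlen huv w hw
    by_contra hcc
    push_neg at hcc
    have hlt := hgeo u v P (P.isPath_of_length_eq_dist hlen) hlen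
    have hmem : ∀ t ∈ P.support, c t ∈ P.support.toFinset.image c := by
      intro t ht
      exact Finset.mem_image_of_mem c (List.mem_toFinset.mpr ht)
    have := card3 _ (c u) (c v) (c w) (hmem u P.start_mem_support)
      (hmem v P.end_mem_support) (hmem w hw) huv (fun h => hcc.1 h.symm)
      (fun h => hcc.2 h.symm)
    omega
  have distAdj : ∀ x y : V, G.Adj x y → G.dist x y = 1 :=
    fun x y h => dist_eq_one_iff_adj.mpr h
  -- distance from the start of a walk to its i-th vertex is at most i
  have distVert : ∀ (u v : V) (P : G.Walk u v) (i : ℕ), G.dist u (P.getVert i) ≤ i := by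
    intro u v P i
    induction i with
    | zero => simp [Walk.getVert_zero]
    | succ i ih =>
      by_cases hi : i < P.length
      · have hadj := P.adj_getVert_succ hi
        calc G.dist u (P.getVert (i + 1))
            ≤ G.dist u (P.getVert i) + G.dist (P.getVert i) (P.getVert (i + 1)) :=
              hconn.dist_triangle
          _ ≤ i + 1 := by rw [distAdj _ _ hadj]; omega
      · have h1 : P.getVert (i + 1) = v := P.getVert_of_length_le (by omega)
        have h2 : P.getVert i = v := P.getVert_of_length_le (by omega)
        rw [h1, ← h2]
        omega
  classical
  -- the set of "min distances" of rainbow edge+vertex configurations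
  set S : Set ℕ := {n | ∃ x y w : V, G.Adj x y ∧ c x ≠ c y ∧ c w ≠ c x ∧ c w ≠ c y ∧
    n = min (G.dist x w) (G.dist y w)} with hS
  -- S is nonempty
  have hSne : S.Nonempty := by
    obtain ⟨x, y, hxy, hcxy⟩ : ∃ x y, G.Adj x y ∧ c x ≠ c y := by
      obtain ⟨v0, hv0⟩ := hc ⟨0, by omega⟩
      obtain ⟨v1, hv1⟩ := hc ⟨1, by omega⟩
      have hne : c v0 ≠ c v1 := by rw [hv0, hv1]; simp [Fin.ext_iff]
      exact exists_adj_ne_aux c (hconn v0 v1).some hne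
    obtain ⟨k, hk1, hk2⟩ : ∃ k : Fin r, k ≠ c x ∧ k ≠ c y := by
      by_contra hcc
      push_neg at hcc
      have hsub : (Finset.univ : Finset (Fin r)) ⊆ {c x, c y} := by
        intro k _
        by_cases h : k = c x
        · simp [h]
        · simp [hcc k h]
      have := Finset.card_le_card hsub
      have h2 : ({c x, c y} : Finset (Fin r)).card ≤ 2 :=
        Finset.card_insert_le _ _ |>.trans (by simp)
      simp [Finset.card_univ] at this
      omega
    obtain ⟨w, rfl⟩ := hc k
    exact ⟨_, x, y, w, hxy, hcxy, hk1, hk2, rfl⟩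
  set d := sInf S with hdd
  have hdS : d ∈ S := Nat.sInf_mem hSne
  have key : ∀ a b z : V, G.Adj a b → c a ≠ c b → c z ≠ c a → c z ≠ c b →
      G.dist a z ≤ G.dist b z → G.dist a z = d → False := by
    intro a b z hab hcab hcza hczb hlab hda
    have haz : a ≠ z := fun h => hcza (h ▸ rfl)
    have hd1 : 1 ≤ d := by
      have := (hconn a z).pos_dist_of_ne haz
      omega
    have hub : G.dist b z ≤ d + 1 := by
      calc G.dist b z ≤ G.dist b a + G.dist a z := hconn.dist_triangle
        _ = 1 + d := by rw [distAdj _ _ hab.symm, hda]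
        _ = d + 1 := by omega
    have hbz : G.dist b z = d ∨ G.dist b z = d + 1 := by omega
    rcases hbz with hbz | hbz
    · -- equal distances
      by_cases hd2 : d = 1
      · -- triangle case
        have ha1 : G.Adj a z := dist_eq_one_iff_adj.mp (by omega)
        have hb1 : G.Adj b z := dist_eq_one_iff_adj.mp (by omega)
        exact hcza (htri a b z hab hb1 ha1.symm hcab hczb.symm).symm
      · -- d ≥ 2
        obtain ⟨P, hP⟩ := hconn.exists_walk_length_eq_dist a z
        have hPlen : P.length = d := by rw [hP, hda]
        have hcol : ∀ t ∈ P.support, c t = c a ∨ c t = c z :=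
          geo2 a z P hP hcza.symm
        have hex : ∃ i, c (P.getVert i) = c z := ⟨P.length, by rw [Walk.getVert_length]⟩
        set i := Nat.find hex with hidef
        have hi : c (P.getVert i) = c z := Nat.find_spec hex
        have hi_le : i ≤ P.length := Nat.find_min' hex (by rw [Walk.getVert_length])
        have hi_pos : 1 ≤ i := by
          rcases Nat.eq_zero_or_pos i with h | h
          · rw [h, Walk.getVert_zero] at hi
            exact absurd hi.symm hcza
          · exact h
        have hprev : c (P.getVert (i - 1)) = c a := by
          have hmin : ¬ c (P.getVert (i - 1)) = c z := Nat.find_min hex (by omega)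
          have hmem : P.getVert (i - 1) ∈ P.support :=
            Walk.mem_support_iff_exists_getVert.mpr ⟨i - 1, rfl, by omega⟩
          rcases hcol _ hmem with h | h
          · exact h
          · exact absurd h hmin
        have hadj' : G.Adj (P.getVert (i - 1)) (P.getVert i) := by
          have := P.adj_getVert_succ (show i - 1 < P.length by omega)
          rwa [show i - 1 + 1 = i by omega] at this
        have hdbp : G.dist b (P.getVert (i - 1)) ≤ i := by
          calc G.dist b (P.getVert (i - 1))
              ≤ G.dist b a + G.dist a (P.getVert (i - 1)) := hconn.dist_triangle
            _ ≤ 1 + (i - 1) := by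
                have := distVert a z P (i - 1)
                have hba := distAdj _ _ hab.symm
                omega
            _ = i := by omega
        by_cases hicase : i ≤ d - 1
        · -- found closer configuration
          have hmemS : min (G.dist (P.getVert (i - 1)) b) (G.dist (P.getVert i) b) ∈ S := by
            refine ⟨P.getVert (i - 1), P.getVert i, b, hadj', ?_, ?_, ?_, rfl⟩
            · rw [hprev, hi]; exact hcza.symm
            · rw [hprev]; exact hcab.symm
            · rw [hi]; exact hczb.symm
          have := Nat.sInf_le hmemS
          have hle2 : min (G.dist (P.getVert (i - 1)) b) (G.dist (P.getVert i) b)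
              ≤ G.dist (P.getVert (i - 1)) b := min_le_left _ _
          rw [SimpleGraph.dist_comm] at hdbp
          omega
        · -- i = d : use geodesic from b
          have hieq : i = d := by omega
          obtain ⟨Q, hQ⟩ := hconn.exists_walk_length_eq_dist b z
          have hQlen : Q.length = d := by rw [hQ, hbz]
          have hcolQ : ∀ t ∈ Q.support, c t = c b ∨ c t = c z :=
            geo2 b z Q hQ hczb.symm
          have hexQ : ∃ j, c (Q.getVert j) = c z := ⟨Q.length, by rw [Walk.getVert_length]⟩
          set j := Nat.find hexQ with hjdef
          have hj : c (Q.getVert j) = c z := Nat.find_spec hexQ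
          have hj_le : j ≤ Q.length := Nat.find_min' hexQ (by rw [Walk.getVert_length])
          have hj_pos : 1 ≤ j := by
            rcases Nat.eq_zero_or_pos j with h | h
            · rw [h, Walk.getVert_zero] at hj
              exact absurd hj.symm hczb
            · exact h
          have hprevQ : c (Q.getVert (j - 1)) = c b := by
            have hmin : ¬ c (Q.getVert (j - 1)) = c z := Nat.find_min hexQ (by omega)
            have hmem : Q.getVert (j - 1) ∈ Q.support :=
              Walk.mem_support_iff_exists_getVert.mpr ⟨j - 1, rfl, by omega⟩
            rcases hcolQ _ hmem with h | h
            · exact h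
            · exact absurd h hmin
          have hadjQ : G.Adj (Q.getVert (j - 1)) (Q.getVert j) := by
            have := Q.adj_getVert_succ (show j - 1 < Q.length by omega)
            rwa [show j - 1 + 1 = j by omega] at this
          by_cases hjcase : j ≤ d - 1
          · have hdaq : G.dist a (Q.getVert (j - 1)) ≤ j := by
              calc G.dist a (Q.getVert (j - 1))
                  ≤ G.dist a b + G.dist b (Q.getVert (j - 1)) := hconn.dist_triangle
                _ ≤ 1 + (j - 1) := by
                    have := distVert b z Q (j - 1)
                    have hba := distAdj _ _ hab
                    omega
                _ = j := by omega
            have hmemS : min (G.dist (Q.getVert (j - 1)) a) (G.dist (Q.getVert j) a) ∈ S := by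
              refine ⟨Q.getVert (j - 1), Q.getVert j, a, hadjQ, ?_, ?_, ?_, rfl⟩
              · rw [hprevQ, hj]; exact hczb.symm
              · rw [hprevQ]; exact hcab
              · rw [hj]; exact hcza.symm
            have := Nat.sInf_le hmemS
            have hle2 : min (G.dist (Q.getVert (j - 1)) a) (G.dist (Q.getVert j) a)
                ≤ G.dist (Q.getVert (j - 1)) a := min_le_left _ _
            rw [SimpleGraph.dist_comm] at hdaq
            omega
          · -- j = d as well: the two penultimate vertices give distance 1 configuration
            have hjeq : j = d := by omega
            have hPd : P.getVert i = z := by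
              rw [hieq, ← hPlen, Walk.getVert_length]
            have hQd : Q.getVert j = z := by
              rw [hjeq, ← hQlen, Walk.getVert_length]
            have hadjQz : G.Adj (Q.getVert (j - 1)) z := by
              have h := hadjQ; rwa [hQd] at h
            have hadjPz : G.Adj (P.getVert (i - 1)) z := by
              have h := hadj'; rwa [hPd] at h
            have hmemS : min (G.dist (Q.getVert (j - 1)) (P.getVert (i - 1)))
                (G.dist z (P.getVert (i - 1))) ∈ S := by
              refine ⟨Q.getVert (j - 1), z, P.getVert (i - 1), hadjQz, ?_, ?_, ?_, rfl⟩
              · rw [hprevQ]; exact hczb.symm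
              · rw [hprev, hprevQ]; exact hcab
              · rw [hprev]; exact hcza.symm
            have := Nat.sInf_le hmemS
            have hzdist : G.dist z (P.getVert (i - 1)) = 1 := distAdj _ _ hadjPz.symm
            have hle2 : min (G.dist (Q.getVert (j - 1)) (P.getVert (i - 1)))
                (G.dist z (P.getVert (i - 1))) ≤ G.dist z (P.getVert (i - 1)) :=
              min_le_right _ _
            omega
    · -- dist b z = d + 1 : a geodesic from b through a has 3 colors
      obtain ⟨P, hP⟩ := hconn.exists_walk_length_eq_dist a z
      set W : G.Walk b z := Walk.cons hab.symm P with hW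
      have hWlen : W.length = G.dist b z := by
        rw [hW, Walk.length_cons, hP, hda, hbz]
      have ha_mem : a ∈ W.support := by
        rw [hW, Walk.support_cons]
        exact List.mem_cons_of_mem _ P.start_mem_support
      rcases geo2 b z W hWlen hczb.symm a ha_mem with h | h
      · exact hcab h
      · exact hcza h.symm
  obtain ⟨x, y, w, hxy, hcxy, hwx, hwy, hmin⟩ := hdS
  rcases le_total (G.dist x w) (G.dist y w) with hle | hle
  · exact key x y w hxy hcxy hwx hwy hle ((min_eq_left hle ▸ hmin).symm)
  · exact key y x w hxy.symm hcxy.symm hwy hwx hle ((min_eq_right hle ▸ hmin).symm)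
end

section
/- If G and H are connected graphs with |V(G)|, |V(H)| ≥ 2, and c is an exact r-coloring of G □ H with r ≥ 3 that avoids rainbow 3-APs, then each copy G_i of G in G □ H (corresponding to a fixed vertex w_i of H) receives at most 2 colors under c. -/
open SimpleGraph

/-!
Let `j` be a neighbour of `i` in `H`. Call `(u, v, z)` bad in a layer if `u ~ v` in `G`,
`d(z, v) = d(z, u) + 1`, and the three vertices get three colours there. In a colouring without
rainbow 3-APs, the 3-APs `(u,j),(u,i),(v,i)` and `(u,j),(z,i),(v,i)` force `c(u,j) = c(v,i)`.
Moving `z` one step towards `u` then turns a bad triple with `d(z, u) = k + 1` into one with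
`d(z, u) = k`, in layer `i` or in layer `j`; so no bad triple exists. But three colours in `G_i`
give an edge `xy` and a vertex `t` with three colours, and `d(t, x) ≠ d(t, y)` since otherwise
`x, t, y` is a rainbow 3-AP, so `x, y, t` (or `y, x, t`) is bad.
-/

namespace SimpleGraph

variable {V W : Type*} {G : SimpleGraph V} {H : SimpleGraph W}

lemma dist_boxProd_of_reachable {a b : V} {s t : W} (hab : G.Reachable a b)
    (hst : H.Reachable s t) : (G □ H).dist (a, s) (b, t) = G.dist a b + H.dist s t := by
  have hGH : (G □ H).Reachable (a, s) (b, t) := reachable_boxProd.mpr ⟨hab, hst⟩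
  apply Nat.cast_injective (R := ℕ∞)
  rw [Nat.cast_add, hGH.coe_dist_eq_edist, hab.coe_dist_eq_edist, hst.coe_dist_eq_edist,
    edist_boxProd]

lemma exists_adj_dist_eq_of_dist_eq_succ {z u : V} {k : ℕ} (h : G.dist z u = k + 1) :
    ∃ w, G.Adj z w ∧ G.dist w u = k := by
  obtain ⟨p, hp⟩ := exists_walk_of_dist_ne_zero (by omega : G.dist z u ≠ 0)
  cases p with
  | nil => simp at h
  | @cons _ w _ hzw p =>
    refine ⟨w, hzw, le_antisymm ?_ ?_⟩
    · have := dist_le p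
      simp only [Walk.length_cons] at hp
      omega
    · have := hzw.reachable.dist_triangle_left u
      rw [dist_eq_one_iff_adj.mpr hzw] at this
      omega

lemma Preconnected.exists_adj_apply_ne {C : Type*} (hG : G.Preconnected) {f : V → C} {a b : V}
    (hab : f a ≠ f b) : ∃ x y, G.Adj x y ∧ f x ≠ f y := by
  obtain ⟨d, -, hd₁, hd₂⟩ := (hG a b).some.exists_boundary_dart {x | f x = f a} rfl hab.symm
  exact ⟨d.fst, d.snd, d.adj, fun h => hd₂ (h.symm.trans hd₁)⟩

lemma Preconnected.exists_adj_and_third_value {C : Type*} [Fintype V] [DecidableEq C]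
    (hG : G.Preconnected) {f : V → C} (hf : 2 < (Finset.univ.image f).card) :
    ∃ x y t, G.Adj x y ∧ f x ≠ f y ∧ f t ≠ f x ∧ f t ≠ f y := by
  obtain ⟨_, ha, _, hb, hab⟩ := Finset.one_lt_card.mp (by omega : 1 < (Finset.univ.image f).card)
  obtain ⟨a, -, rfl⟩ := Finset.mem_image.mp ha
  obtain ⟨b, -, rfl⟩ := Finset.mem_image.mp hb
  obtain ⟨x, y, hxy, hfxy⟩ := hG.exists_adj_apply_ne hab
  by_contra! h
  have : Finset.univ.image f ⊆ {f x, f y} := by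
    intro _ hk
    obtain ⟨t, -, rfl⟩ := Finset.mem_image.mp hk
    by_cases htx : f t = f x
    · simp [htx]
    · simp [h x y t hxy hfxy htx]
  have := (Finset.card_le_card this).trans Finset.card_le_two
  omega

end SimpleGraph

def IsRainbowTriple {α C : Type*} (c : α → C) (a b d : α) : Prop :=
  c a ≠ c b ∧ c b ≠ c d ∧ c a ≠ c d

lemma not_isRainbowTriple_of_dist_eq {V C : Type*} {G : SimpleGraph V} {c : V → C}
    (hc : ¬ HasRainbow3AP G c) {a b d : V} (h : G.dist a b = G.dist b d) :
    ¬ IsRainbowTriple c a b d :=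
  fun hr => hc ⟨a, b, d, h, hr⟩

section BoxProd

variable {V W C : Type*} {G : SimpleGraph V} {H : SimpleGraph W} {c : V × W → C}

lemma color_layer_near_eq (hG : G.Connected) (hH : H.Connected) (hc : ¬ HasRainbow3AP (G □ H) c)
    {i j : W} (hij : H.Adj i j) {u v z : V} (huv : G.Adj u v)
    (hz : G.dist z v = G.dist z u + 1) (hr : IsRainbowTriple c (u, i) (v, i) (z, i)) :
    c (u, j) = c (v, i) := by
  have hd := fun a b s t => dist_boxProd_of_reachable (hG a b) (hH s t)
  have hji : H.dist j i = 1 := dist_eq_one_iff_adj.mpr hij.symm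
  have h₁ := not_isRainbowTriple_of_dist_eq hc (a := (u, j)) (b := (u, i)) (d := (v, i)) (by
    simp only [hd, dist_self, hji, dist_eq_one_iff_adj.mpr huv])
  have h₂ := not_isRainbowTriple_of_dist_eq hc (a := (u, j)) (b := (z, i)) (d := (v, i)) (by
    simp only [hd, dist_self, hji, hz, G.dist_comm (u := u)])
  unfold IsRainbowTriple at *
  grind

lemma color_layer_far_eq (hG : G.Connected) (hH : H.Connected) (hc : ¬ HasRainbow3AP (G □ H) c)
    {i j : W} (hij : H.Adj i j) {u v w : V} (huv : G.Adj u v)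
    (hw : G.dist w v = G.dist w u + 1) (hr : IsRainbowTriple c (u, i) (v, i) (w, j)) :
    c (v, j) = c (u, i) := by
  have hd := fun a b s t => dist_boxProd_of_reachable (hG a b) (hH s t)
  have hji : H.dist j i = 1 := dist_eq_one_iff_adj.mpr hij.symm
  have h₁ := not_isRainbowTriple_of_dist_eq hc (a := (v, j)) (b := (v, i)) (d := (u, i)) (by
    simp only [hd, dist_self, hji, dist_eq_one_iff_adj.mpr huv.symm])
  have h₂ := not_isRainbowTriple_of_dist_eq hc (a := (v, j)) (b := (w, j)) (d := (u, i)) (by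
    simp only [hd, dist_self, hji, hw, G.dist_comm (u := v)])
  unfold IsRainbowTriple at *
  grind

theorem not_isRainbowTriple_of_dist_eq_succ (hG : G.Connected) (hH : H.Connected)
    (hc : ¬ HasRainbow3AP (G □ H) c) {i j : W} (hij : H.Adj i j) {u v z : V} (huv : G.Adj u v)
    (hz : G.dist z v = G.dist z u + 1) : ¬ IsRainbowTriple c (u, i) (v, i) (z, i) := by
  induction hk : G.dist z u generalizing i j u v z with
  | zero =>
    rintro ⟨-, -, hzu⟩
    exact hzu (by rw [(hG.dist_eq_zero_iff).mp hk])
  | succ k ih =>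
    rintro hr
    obtain ⟨w, hzw, hwu⟩ := exists_adj_dist_eq_of_dist_eq_succ hk
    have hwv : G.dist w v = G.dist w u + 1 := by
      have := hG.dist_triangle (u := w) (v := u) (w := v)
      have := hG.dist_triangle (u := z) (v := w) (w := v)
      have := dist_eq_one_iff_adj.mpr huv
      have := dist_eq_one_iff_adj.mpr hzw
      omega
    obtain ⟨huv_c, hvz_c, huz_c⟩ := hr
    obtain hwz_c | hwz_c := eq_or_ne (c (w, i)) (c (z, i))
    · exact ih hij huv hwv hwu ⟨huv_c, hwz_c ▸ hvz_c, hwz_c ▸ huz_c⟩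
    obtain hwu_c | hwu_c := ne_or_eq (c (w, i)) (c (u, i))
    · refine ih hij hzw.symm ?_ (by rw [G.dist_comm, hwu]) ⟨hwz_c, huz_c.symm, hwu_c⟩
      rw [G.dist_comm, hk, G.dist_comm, hwu]
    -- `w` has the colour of `u`: in layer `j`, `(u, v, w)` carries the colours of `(v, u, z)`.
    have hvzw : G.dist v z = G.dist v w + 1 := by rw [G.dist_comm, hz, hk, G.dist_comm, hwv, hwu]
    have huj := color_layer_near_eq hG hH hc hij huv hz ⟨huv_c, hvz_c, huz_c⟩
    have hwj := color_layer_near_eq hG hH hc hij hzw.symm hvzw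
      ⟨hwz_c, hvz_c.symm, hwu_c ▸ huv_c⟩
    have hvj := color_layer_far_eq hG hH hc hij huv hwv
      ⟨huv_c, hwj ▸ hvz_c, hwj ▸ huz_c⟩
    refine ih hij.symm huv hwv hwu ?_
    rw [IsRainbowTriple, huj, hvj, hwj]
    exact ⟨huv_c.symm, huz_c, hvz_c⟩

end BoxProd

theorem stmt_3_general {V W : Type*} [Fintype V] [Fintype W]
    (G : SimpleGraph V) (H : SimpleGraph W)
    (hG : G.Connected) (hH : H.Connected)
    (hW : 2 ≤ Fintype.card W)
    (r : ℕ) (c : V × W → Fin r)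
    (hrf : ¬ HasRainbow3AP (G □ H) c) (i : W) :
    (Finset.univ.image (fun u : V => c (u, i))).card ≤ 2 := by
  by_contra! hcard
  obtain ⟨x, y, t, hxy, hxy_c, htx_c, hty_c⟩ := hG.preconnected.exists_adj_and_third_value hcard
  have : Nontrivial W := Fintype.one_lt_card_iff_nontrivial.mp hW
  obtain ⟨j, hij⟩ := hH.preconnected.exists_adj_of_nontrivial i
  rcases hxy.diff_dist_adj (u := t) with h | h | h
  · refine not_isRainbowTriple_of_dist_eq hrf (a := (x, i)) (b := (t, i)) (d := (y, i)) ?_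
      ⟨htx_c.symm, hty_c, hxy_c⟩
    rw [dist_boxProd_of_reachable (hG x t) (hH i i), dist_boxProd_of_reachable (hG t y) (hH i i),
      G.dist_comm, h]
  · exact not_isRainbowTriple_of_dist_eq_succ hG hH hrf hij hxy h ⟨hxy_c, hty_c.symm, htx_c.symm⟩
  · have := hG.pos_dist_of_ne (u := t) (v := x) (by rintro rfl; exact htx_c rfl)
    exact not_isRainbowTriple_of_dist_eq_succ hG hH hrf hij hxy.symm (by omega)
      ⟨hxy_c.symm, htx_c.symm, hty_c.symm⟩

theorem stmt_3 {V W : Type*} [Fintype V] [Fintype W]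
    (G : SimpleGraph V) (H : SimpleGraph W)
    (hG : G.Connected) (hH : H.Connected)
    (hV : 2 ≤ Fintype.card V) (hW : 2 ≤ Fintype.card W)
    (r : ℕ) (hr : 3 ≤ r) (c : V × W → Fin r) (hc : Function.Surjective c)
    (hrf : ¬ HasRainbow3AP (G □ H) c) (i : W) :
    (Finset.univ.image (fun u : V => c (u, i))).card ≤ 2 :=
  stmt_3_general G H hG hH hW r c hrf i
end

section
/- If G and H are connected graphs with |V(G)| ≥ 2 and |V(H)| ≥ 3, c is an exact rainbow-free r-coloring of G □ H with r ≥ 3, and w_i w_j is an edge of H, then the union of the copies G_i and G_j receives at most 2 colors: |c(V(G_i) ∪ V(G_j))| ≤ 2. -/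
/-!
Distances in `G □ H` are sums of coordinate distances, so rainbow-freeness becomes a family of
constraints between the colourings `c (·, w)` of the copies of `G`.

If the copies `i` and `j` are coloured alike, take an edge `uv` of `G` with `c u ≠ c v`: since
`d(e, u)` and `d(e, v)` differ by at most one, a third colour at `e` yields a rainbow 3-AP inside
`G_i ∪ G_j`. Otherwise some `a` is bichromatic, `c (a, i) ≠ c (a, j)`, and we show that every colour of
`G_i ∪ G_j` is one of these two. As `|V(H)| ≥ 3`, a third vertex `k` of `H` is adjacent to `i`
or `j`, and `i, j, k` form a triangle or a path. Following a geodesic of `G` from `a` to a vertex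
`e` carrying a third colour and using the copy `G_k` forces a rainbow 3-AP; in the path case this
is an induction on `d(a, e)` in which the bichromatic vertex may pass from `G_i, G_j` to `G_k, G_j`.
-/

open SimpleGraph

namespace SimpleGraph

variable {V W β : Type*} {G : SimpleGraph V} {H : SimpleGraph W}

theorem Connected.dist_boxProd (hG : G.Connected) (hH : H.Connected) (x y : V × W) :
    (G □ H).dist x y = G.dist x.1 y.1 + H.dist x.2 y.2 := by
  have h := edist_boxProd (G := G) (H := H) x y
  rw [← (hG x.1 y.1).coe_dist_eq_edist, ← (hH x.2 y.2).coe_dist_eq_edist,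
    ← ((hG.boxProd hH) x y).coe_dist_eq_edist] at h
  exact_mod_cast h

theorem Connected.exists_adj_dist_add_one_eq (hG : G.Connected) {u v : V} (huv : u ≠ v) :
    ∃ w, G.Adj v w ∧ G.dist u w + 1 = G.dist u v := by
  obtain ⟨p, hp⟩ := hG.exists_walk_length_eq_dist v u
  cases p with
  | nil => exact absurd rfl huv
  | @cons _ w _ hvw q =>
    have hq : G.dist u w ≤ q.length := dist_comm (G := G) ▸ dist_le q
    have htri : G.dist u v ≤ G.dist u w + G.dist w v := hG.dist_triangle
    rw [dist_eq_one_iff_adj.mpr hvw.symm] at htri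
    rw [Walk.length_cons, dist_comm] at hp
    exact ⟨w, hvw, by omega⟩

theorem Connected.exists_adj_ne_of_ne (hG : G.Connected) {f : V → β} {x y : V}
    (hxy : f x ≠ f y) : ∃ u v, G.Adj u v ∧ f u ≠ f v := by
  obtain ⟨p⟩ := hG x y
  obtain ⟨d, -, hd, hd'⟩ := p.exists_boundary_dart {z | f z = f x} rfl hxy.symm
  exact ⟨d.fst, d.snd, d.adj, fun h ↦ hd' (h.symm.trans hd)⟩

theorem Connected.exists_adj_ne_ne [Fintype W] (hH : H.Connected) (hW : 3 ≤ Fintype.card W)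
    (i j : W) : ∃ k, k ≠ i ∧ k ≠ j ∧ (H.Adj i k ∨ H.Adj j k) := by
  classical
  obtain ⟨w, -, hw⟩ := Finset.exists_mem_notMem_of_card_lt_card (s := {i, j})
    (Finset.card_le_two.trans_lt (by rwa [Finset.card_univ]) : _ < (Finset.univ : Finset W).card)
  obtain ⟨p⟩ := hH i w
  obtain ⟨d, -, hd, hd'⟩ := p.exists_boundary_dart {i, j} (by simp) (by simpa using hw)
  simp only [Set.mem_insert_iff, Set.mem_singleton_iff, not_or] at hd hd'
  rcases hd with hd | hd
  · exact ⟨d.snd, hd'.1, hd'.2, .inl (hd ▸ d.adj)⟩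
  · exact ⟨d.snd, hd'.1, hd'.2, .inr (hd ▸ d.adj)⟩

theorem Connected.card_image_le_two [Fintype V] [DecidableEq β] (hG : G.Connected) (f : V → β)
    (hf : ∀ u v, G.Adj u v → f u ≠ f v → ∀ e, f e = f u ∨ f e = f v) :
    (Finset.univ.image f).card ≤ 2 := by
  by_contra! h
  obtain ⟨_, hx, _, hy, _, hz, hxy, hxz, hyz⟩ := Finset.two_lt_card.mp h
  simp only [Finset.mem_image, Finset.mem_univ, true_and] at hx hy hz
  obtain ⟨x, rfl⟩ := hx
  obtain ⟨y, rfl⟩ := hy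
  obtain ⟨z, rfl⟩ := hz
  obtain ⟨u, v, huv, hne⟩ := hG.exists_adj_ne_of_ne hxy
  grind [hf u v huv hne x, hf u v huv hne y, hf u v huv hne z]

end SimpleGraph

section

variable {V W C : Type*}

/-- `(u, p)` plays the centre of the 3-AP; for connected `G`, `H` the sums are distances in
`G □ H` (`SimpleGraph.Connected.dist_boxProd`). -/
def BoxRainbowFree (G : SimpleGraph V) (H : SimpleGraph W) (c : V × W → C) : Prop :=
  ∀ u v w p q s, G.dist u v + H.dist p q = G.dist u w + H.dist p s →
    c (u, p) = c (v, q) ∨ c (v, q) = c (w, s) ∨ c (u, p) = c (w, s)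

variable {G : SimpleGraph V} {H : SimpleGraph W} {c : V × W → C}

theorem boxRainbowFree_of_not_hasRainbow3AP (hG : G.Connected) (hH : H.Connected)
    (hc : ¬ HasRainbow3AP (G □ H) c) : BoxRainbowFree G H c := by
  intro u v w p q s h
  by_contra! hne
  refine hc ⟨(v, q), (u, p), (w, s), ?_, Ne.symm hne.1, hne.2.2, hne.2.1⟩
  rwa [SimpleGraph.dist_comm, hG.dist_boxProd hH, hG.dist_boxProd hH]

namespace BoxRainbowFree

theorem eq_or_eq_end_of_path (hc : BoxRainbowFree G H c) (hG : G.Connected) {i j k : W}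
    (hij : H.dist i j = 1) (hkj : H.dist k j = 1) (hik : H.dist i k = 2)
    {a : V} (ha : c (a, i) ≠ c (a, j)) (e : V) :
    c (e, i) = c (a, i) ∨ c (e, i) = c (a, j) := by
  -- Step `a` towards `e`: the next bichromatic vertex lies between copies `i, j` or between the
  -- other outer copy `k` and `j`, so the induction runs over both outer copies.
  induction hn : G.dist e a using Nat.strong_induction_on generalizing a i k with
  | _ n ih =>
  by_contra! he
  obtain ⟨v, hav, hv⟩ := hG.exists_adj_dist_add_one_eq fun h : e = a ↦ he.1 (h ▸ rfl)
  replace hav : G.dist a v = 1 := dist_eq_one_iff_adj.mpr hav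
  have hji : H.dist j i = 1 := by rwa [SimpleGraph.dist_comm]
  have hjk : H.dist j k = 1 := by rwa [SimpleGraph.dist_comm]
  have hvi : c (v, i) = c (a, i) ∨ c (v, i) = c (a, j) := by
    have := hc a v a i i j (by simp only [dist_self]; omega)
    grind
  have hvj : c (v, j) = c (a, i) := by
    have := hc e a v i i j (by simp only [dist_self]; omega)
    have := hc a v a j j i (by simp only [dist_self]; omega)
    grind
  rcases hvi with hvi | hvi
  · have hvk : c (v, k) = c (a, j) := by
      have := hc e a v i j k (by omega)
      have := hc a v v j i k (by omega)
      grind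
    have hek : c (e, k) = c (a, j) ∨ c (e, k) = c (e, i) := by
      have := hc a e e j i k (by omega)
      grind
    rcases hek with hek | hek
    · have := hc v e e j i k (by omega)
      grind
    · have := ih _ (by omega) hkj hij (by rwa [SimpleGraph.dist_comm]) (a := v) (by grind) rfl
      grind
  · have := ih _ (by omega) hij hkj hik (a := v) (by grind) rfl
    grind

theorem eq_or_eq_middle_of_path (hc : BoxRainbowFree G H c) (hG : G.Connected) {i j k : W}
    (hij : H.dist i j = 1) (hkj : H.dist k j = 1) (hik : H.dist i k = 2)
    {a : V} (ha : c (a, i) ≠ c (a, j)) (e : V) :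
    c (e, j) = c (a, i) ∨ c (e, j) = c (a, j) := by
  by_contra! he
  have hji : H.dist j i = 1 := by rwa [SimpleGraph.dist_comm]
  have hei := hc.eq_or_eq_end_of_path hG hij hkj hik ha e
  -- `e` is bichromatic too, and the colour pairs at `a` and at `e` share only `c (e, i)`.
  have hconst : ∀ x, c (x, i) = c (e, i) := fun x ↦ by
    have := hc.eq_or_eq_end_of_path hG hij hkj hik ha x
    have := hc.eq_or_eq_end_of_path hG hij hkj hik (a := e) (by grind) x
    grind
  obtain ⟨w, -, hw⟩ := hG.exists_adj_dist_add_one_eq fun h : e = a ↦ he.2 (h ▸ rfl)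
  have := hc e a w j j i (by simp only [dist_self]; omega)
  grind [hconst a, hconst w]

theorem eq_or_eq_of_triangle (hc : BoxRainbowFree G H c) (hG : G.Connected) {i j k : W}
    (hij : H.dist i j = 1) (hik : H.dist i k = 1) (hjk : H.dist j k = 1)
    {a : V} (ha : c (a, i) ≠ c (a, j)) (e : V) :
    c (e, i) = c (a, i) ∨ c (e, i) = c (a, j) := by
  by_contra! he
  have hji : H.dist j i = 1 := by rwa [SimpleGraph.dist_comm]
  have hki : H.dist k i = 1 := by rwa [SimpleGraph.dist_comm]
  have hkj : H.dist k j = 1 := by rwa [SimpleGraph.dist_comm]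
  have hek : c (e, k) = c (a, j) := by
    have := hc e a a k i j (by omega)
    have := hc a e e j i k (by omega)
    grind
  have hak : c (a, k) = c (a, i) ∨ c (a, k) = c (a, j) :=
    (hc a a a k i j (by omega)).imp_right (Or.resolve_left · ha)
  rcases hak with hak | hak
  · have := hc e e e j i k (by omega)
    have := hc a e e i j k (by omega)
    have := hc a e e k i j (by omega)
    grind
  · have hj : ∀ b, c (b, j) = c (a, j) := fun b ↦ by
      have := hc b e e j i k (by omega)
      have := hc b a a j i k (by omega)
      grind
    obtain ⟨v, -, hv⟩ := hG.exists_adj_dist_add_one_eq fun h : a = e ↦ he.1 (h ▸ rfl)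
    have := hc a e v i i j (by simp only [dist_self]; omega)
    grind [hj v]

theorem eq_or_eq_of_adj_of_adj (hc : BoxRainbowFree G H c) (hG : G.Connected) {i j k : W}
    (hij : H.Adj i j) (hjk : H.Adj j k) (hki : k ≠ i) {a : V} (ha : c (a, i) ≠ c (a, j))
    (e : V) : (c (e, i) = c (a, i) ∨ c (e, i) = c (a, j)) ∧
      (c (e, j) = c (a, i) ∨ c (e, j) = c (a, j)) := by
  have hij' : H.dist i j = 1 := dist_eq_one_iff_adj.mpr hij
  have hji' : H.dist j i = 1 := dist_eq_one_iff_adj.mpr hij.symm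
  have hjk' : H.dist j k = 1 := dist_eq_one_iff_adj.mpr hjk
  have hkj' : H.dist k j = 1 := dist_eq_one_iff_adj.mpr hjk.symm
  by_cases hik : H.Adj i k
  · have hik' : H.dist i k = 1 := dist_eq_one_iff_adj.mpr hik
    exact ⟨hc.eq_or_eq_of_triangle hG hij' hik' hjk' ha e,
      (hc.eq_or_eq_of_triangle hG hji' hjk' hik' ha.symm e).symm⟩
  · have hik' : H.dist i k = 2 := by
      have : H.dist i k ≤ 2 := dist_le (.cons hij (.cons hjk .nil))
      have := (hij.reachable.trans hjk.reachable).one_lt_dist_of_ne_of_not_adj hki.symm hik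
      omega
    exact ⟨hc.eq_or_eq_end_of_path hG hij' hkj' hik' ha e,
      hc.eq_or_eq_middle_of_path hG hij' hkj' hik' ha e⟩

theorem eq_or_eq_of_adj [Fintype W] (hc : BoxRainbowFree G H c) (hG : G.Connected)
    (hH : H.Connected) (hW : 3 ≤ Fintype.card W) {i j : W} (hij : H.Adj i j) {a : V}
    (ha : c (a, i) ≠ c (a, j)) (e : V) : (c (e, i) = c (a, i) ∨ c (e, i) = c (a, j)) ∧
      (c (e, j) = c (a, i) ∨ c (e, j) = c (a, j)) := by
  obtain ⟨k, hki, hkj, hk | hk⟩ := hH.exists_adj_ne_ne hW i j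
  · obtain ⟨h1, h2⟩ := hc.eq_or_eq_of_adj_of_adj hG hij.symm hk hkj (Ne.symm ha) e
    exact ⟨h2.symm, h1.symm⟩
  · exact hc.eq_or_eq_of_adj_of_adj hG hij hk hki ha e

theorem eq_or_eq_of_forall_eq (hc : BoxRainbowFree G H c) {i j : W} (hij : H.dist i j = 1)
    (hcopy : ∀ x, c (x, i) = c (x, j)) {u v : V} (huv : G.Adj u v) (hne : c (u, i) ≠ c (v, i))
    (e : V) : c (e, i) = c (u, i) ∨ c (e, i) = c (v, i) := by
  by_contra! he
  have hdist : G.dist e u = G.dist e v ∨ G.dist e v = G.dist e u + 1 ∨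
      G.dist e u = G.dist e v + 1 := by
    have := huv.diff_dist_adj (u := e)
    omega
  rcases hdist with h | h | h
  · have := hc e u v i i i (by omega)
    grind
  · have := hc e v u i i j (by simp only [dist_self]; omega)
    grind
  · have := hc e u v i i j (by simp only [dist_self]; omega)
    grind

end BoxRainbowFree

end

theorem stmt_4_general {V W : Type*} [Fintype V] [Fintype W]
    (G : SimpleGraph V) (H : SimpleGraph W)
    (hG : G.Connected) (hH : H.Connected)
    (hW : 3 ≤ Fintype.card W)
    (r : ℕ) (c : V × W → Fin r)
    (hrf : ¬ HasRainbow3AP (G □ H) c) (i j : W) (hij : H.Adj i j) :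
    (Finset.univ.image (fun u : V => c (u, i)) ∪
      Finset.univ.image (fun u : V => c (u, j))).card ≤ 2 := by
  have hbox := boxRainbowFree_of_not_hasRainbow3AP hG hH hrf
  by_cases hcopy : ∀ a, c (a, i) = c (a, j)
  · simp only [← hcopy, Finset.union_self]
    exact hG.card_image_le_two _ fun u v huv hne ↦
      hbox.eq_or_eq_of_forall_eq (dist_eq_one_iff_adj.mpr hij) hcopy huv hne
  obtain ⟨a, ha⟩ := not_forall.mp hcopy
  refine (Finset.card_le_card fun x hx ↦ ?_).trans
    (Finset.card_le_two (a := c (a, i)) (b := c (a, j)))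
  simp only [Finset.mem_union, Finset.mem_image, Finset.mem_univ, true_and] at hx
  rcases hx with ⟨e, rfl⟩ | ⟨e, rfl⟩
  · simpa using (hbox.eq_or_eq_of_adj hG hH hW hij ha e).1
  · simpa using (hbox.eq_or_eq_of_adj hG hH hW hij ha e).2

theorem stmt_4 {V W : Type*} [Fintype V] [Fintype W]
    (G : SimpleGraph V) (H : SimpleGraph W)
    (hG : G.Connected) (hH : H.Connected)
    (hV : 2 ≤ Fintype.card V) (hW : 3 ≤ Fintype.card W)
    (r : ℕ) (hr : 3 ≤ r) (c : V × W → Fin r) (hc : Function.Surjective c)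
    (hrf : ¬ HasRainbow3AP (G □ H) c) (i j : W) (hij : H.Adj i j) :
    (Finset.univ.image (fun u : V => c (u, i)) ∪
      Finset.univ.image (fun u : V => c (u, j))).card ≤ 2 :=
  stmt_4_general G H hG hH hW r c hrf i j hij
end

section
/- For integers m ≥ 2 and k ≥ 1, the anti-van der Waerden number aw(P_m □ C_{2k+1}, 3) = 3. -/
open SimpleGraph

/-
Distances in `P_m □ C_{2k+1}` are `|i - i'| + ‖y - y'‖`, where `‖e‖` (`Fin.cycleNorm e`) is the
distance from `0` to `e` in the cycle. Suppose a surjective 3-colouring has no rainbow 3-AP and take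
a window of consecutive rows of minimal height containing all three colours.

If the window is a single row, use a neighbouring row. Along the row, a pattern `P Q … Q R` of
length at most `k + 1` is impossible: APs through the neighbouring row force two more colours, and
then a rainbow AP appears inside the row. Hence, across a colour change `x, x + 1`, the third colour
can only sit at the antipodal position `x + (k + 1)`; the colour changes on both sides of that
position then place the remaining colours incompatibly.

Otherwise a colour `A` occurs only in the top row `r₀` and a colour `B` only in the bottom row `r₁`.
For adjacent rows, reflecting row `r₁` through an `A`-position of row `r₀` preserves its
`B`-positions and vice versa; two such reflections translate by `4 (b - a)`, and since `4` is
invertible modulo `2k + 1` some column carries `A` over `B`. Such a column propagates around the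
cycle, leaving no room for the third colour. For three or more rows the interior rows are all `C`:
an `A` at `(r₀, p)` and a `B` at `(r₁, q)` fewer than `k` columns apart form an AP with a vertex of
the row above `r₁`; when they are exactly `k` apart, reflection through `p` makes both `p ± k` carry
`B`, and `(r₀, p - 1)` then yields a close pair or an AP with `(r₁, p + k)` and `(r₀, p)`.
-/

namespace SimpleGraph

variable {V : Type*} {G : SimpleGraph V}

theorem dist_eq_of_lipschitz_of_descent (v : V) (f : V → ℕ)
    (hlip : ∀ ⦃x y⦄, G.Adj x y → f x ≤ f y + 1)
    (hdesc : ∀ x, x ≠ v → ∃ y, G.Adj x y ∧ f y + 1 = f x) (hv : f v = 0) (u : V) :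
    G.dist u v = f u := by
  have walk : ∀ n u, f u = n → ∃ w : G.Walk u v, w.length = n := by
    intro n
    induction n with
    | zero =>
      intro u hu
      obtain rfl : u = v := by
        by_contra hne
        obtain ⟨y, -, hy⟩ := hdesc u hne
        omega
      exact ⟨.nil, rfl⟩
    | succ n ih =>
      intro u hu
      obtain ⟨y, hadj, hy⟩ := hdesc u (by rintro rfl; omega)
      obtain ⟨w, hw⟩ := ih y (by omega)
      exact ⟨.cons hadj w, by simp [hw]⟩
  have lower : ∀ {x y : V} (w : G.Walk x y), f x ≤ f y + w.length := by
    intro x y w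
    induction w with
    | nil => simp
    | cons hadj w ih => have := hlip hadj; simp only [Walk.length_cons]; omega
  obtain ⟨w, hw⟩ := walk _ u rfl
  obtain ⟨w', hw'⟩ := Reachable.exists_walk_length_eq_dist ⟨w⟩
  have := lower w'
  exact le_antisymm (hw ▸ dist_le w) (by omega)

theorem dist_boxProd_of_preconnected {W : Type*} {H : SimpleGraph W} (hG : G.Preconnected)
    (hH : H.Preconnected) (x y : V × W) :
    (G □ H).dist x y = G.dist x.1 y.1 + H.dist x.2 y.2 := by
  have h := edist_boxProd (G := G) (H := H) x y
  rw [← (hG _ _).coe_dist_eq_edist, ← (hH _ _).coe_dist_eq_edist,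
    ← (reachable_boxProd.2 ⟨hG x.1 y.1, hH x.2 y.2⟩).coe_dist_eq_edist] at h
  exact_mod_cast h

theorem dist_pathGraph {m : ℕ} (i j : Fin m) : (pathGraph m).dist i j = Nat.dist i j := by
  refine dist_eq_of_lipschitz_of_descent j (fun i => Nat.dist i j) ?_ ?_ (Nat.dist_self _) i
  · intro x y hxy
    rw [pathGraph_adj] at hxy
    simp only [Nat.dist] at *
    omega
  · intro x hx
    rcases lt_or_gt_of_ne (Fin.val_ne_of_ne hx) with h | h
    · refine ⟨⟨x + 1, by omega⟩, by simp [pathGraph_adj], ?_⟩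
      simp only [Nat.dist]
      omega
    · refine ⟨⟨x - 1, by omega⟩, by simp [pathGraph_adj]; omega, ?_⟩
      simp only [Nat.dist]
      omega

end SimpleGraph

theorem Nat.exists_run_of_ne {α : Type*} {f : ℕ → α} {a b : ℕ} (hab : a ≤ b) (hb : f b ≠ f a) :
    ∃ t, a ≤ t ∧ t < b ∧ (∀ j, a ≤ j → j ≤ t → f j = f a) ∧ f (t + 1) ≠ f a := by
  classical
  have hab' : a < b := lt_of_le_of_ne hab (by rintro rfl; exact hb rfl)
  have hex : ∃ j, a < j ∧ f j ≠ f a := ⟨b, hab', hb⟩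
  obtain ⟨hlt, hne⟩ := Nat.find_spec hex
  have hle : Nat.find hex ≤ b := Nat.find_min' hex ⟨hab', hb⟩
  refine ⟨Nat.find hex - 1, by omega, by omega, fun j h₁ h₂ => ?_,
    by rwa [Nat.sub_add_cancel (by omega)]⟩
  rcases eq_or_lt_of_le h₁ with rfl | h₁
  · rfl
  · by_contra h
    exact Nat.find_min hex (show j < Nat.find hex by omega) ⟨h₁, h⟩

theorem HasRainbow3AP.three_le {V : Type*} {G : SimpleGraph V} {r : ℕ} {c : V → Fin r}
    (h : HasRainbow3AP G c) : 3 ≤ r := by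
  obtain ⟨v₁, v₂, v₃, -, h₁₂, h₂₃, h₁₃⟩ := h
  omega

open SimpleGraph
open scoped Fin.CommRing

namespace Fin

theorem eq_or_eq_or_eq_of_ne {P Q R : Fin 3} (hPQ : P ≠ Q) (hQR : Q ≠ R) (hPR : P ≠ R)
    (x : Fin 3) : x = P ∨ x = Q ∨ x = R := by
  omega

theorem exists_ne_and_ne (P Q : Fin 3) : ∃ R : Fin 3, R ≠ P ∧ R ≠ Q := by
  revert P Q
  decide

variable {n : ℕ}

theorem eq_one_of_val_eq_one {e : Fin (n + 1)} (h : (e : ℕ) = 1) : e = 1 := by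
  have := e.isLt
  exact Fin.ext (by rw [h, val_one', Nat.mod_eq_of_lt (by omega)])

theorem natCast_ne_zero_of_lt [NeZero n] {j : ℕ} (h₀ : 0 < j) (h : j < n) : (j : Fin n) ≠ 0 := by
  rw [Ne, natCast_eq_zero]
  exact Nat.not_dvd_of_pos_of_lt h₀ h

theorem add_natCast_mul_of_forall [NeZero n] {p : Fin n → Prop} {d : Fin n}
    (h : ∀ x, p x → p (x + d)) {x : Fin n} (hx : p x) (t : ℕ) : p (x + t * d) := by
  induction t with
  | zero => simpa using hx
  | succ t ih => simpa [add_one_mul, ← add_assoc] using h _ ih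

theorem forall_of_forall_add_one [NeZero n] {p : Fin n → Prop} (h : ∀ x, p x → p (x + 1))
    {a : Fin n} (ha : p a) (y : Fin n) : p y := by
  simpa using add_natCast_mul_of_forall h ha (y - a : Fin n)

theorem exists_ne_add_one [NeZero n] {α : Type*} {f : Fin n → α} {a b : Fin n}
    (hab : f a ≠ f b) : ∃ x, f x ≠ f (x + 1) := by
  by_contra! h
  exact hab (forall_of_forall_add_one (p := fun x => f x = f a)
    (fun x hx => (h x).symm.trans hx) rfl b).symm

def cycleNorm (e : Fin n) : ℕ := min e.val (n - e.val)

theorem cycleNorm_le_half (e : Fin n) : 2 * cycleNorm e ≤ n := by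
  unfold cycleNorm
  omega

@[simp] theorem cycleNorm_zero [NeZero n] : cycleNorm (0 : Fin n) = 0 := by
  simp [cycleNorm]

@[simp] theorem cycleNorm_neg [NeZero n] (e : Fin n) : cycleNorm (-e) = cycleNorm e := by
  have := e.isLt
  unfold cycleNorm
  rw [val_neg]
  split_ifs with h <;> simp_all; omega

theorem cycleNorm_sub_comm [NeZero n] (a b : Fin n) : cycleNorm (a - b) = cycleNorm (b - a) := by
  rw [← neg_sub, cycleNorm_neg]

theorem cycleNorm_natCast [NeZero n] {j : ℕ} (h : 2 * j ≤ n) : cycleNorm (j : Fin n) = j := by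
  have := NeZero.pos n
  unfold cycleNorm
  rw [val_natCast, Nat.mod_eq_of_lt (by omega)]
  omega

theorem cycleNorm_add_one_le (e : Fin (n + 1)) : cycleNorm (e + 1) ≤ cycleNorm e + 1 := by
  have := e.isLt
  unfold cycleNorm
  rw [val_add_one]
  split_ifs <;> omega

theorem cycleNorm_sub_one_le (e : Fin (n + 1)) : cycleNorm (e - 1) ≤ cycleNorm e + 1 := by
  have := e.isLt
  unfold cycleNorm
  rw [coe_sub_one]
  split_ifs <;> omega

theorem cycleNorm_sub_one_or_add_one {e : Fin (n + 1)} (he : e ≠ 0) :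
    cycleNorm (e - 1) + 1 = cycleNorm e ∨ cycleNorm (e + 1) + 1 = cycleNorm e := by
  have := e.isLt
  have he' : (e : ℕ) ≠ 0 := fun h => he (Fin.ext h)
  unfold cycleNorm
  rw [coe_sub_one, val_add_one, if_neg he]
  split_ifs with hl
  · subst hl
    simp
    omega
  · omega

end Fin

open Fin

theorem SimpleGraph.dist_cycleGraph {n : ℕ} (a b : Fin (n + 1)) :
    (cycleGraph (n + 1)).dist a b = cycleNorm (a - b) := by
  refine dist_eq_of_lipschitz_of_descent b (fun a => cycleNorm (a - b)) ?_ ?_ (by simp) a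
  · intro x y hxy
    rw [cycleGraph_adj'] at hxy
    rcases hxy with h | h
    · have : x - b = y - b + 1 := by linear_combination eq_one_of_val_eq_one h
      simpa only [this] using cycleNorm_add_one_le (y - b)
    · have : x - b = y - b - 1 := by linear_combination -eq_one_of_val_eq_one h
      simpa only [this] using cycleNorm_sub_one_le (y - b)
  · intro x hx
    have hn : 1 ≤ n := by
      by_contra h₀
      have := x.isLt
      have := b.isLt
      exact hx (Fin.ext (by omega))
    have h₁ : ((1 : Fin (n + 1)) : ℕ) = 1 := by rw [val_one', Nat.mod_eq_of_lt (by omega)]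
    rcases cycleNorm_sub_one_or_add_one (sub_ne_zero.2 hx) with h | h
    · exact ⟨x - 1, by rw [cycleGraph_adj']; left; simpa using h₁, by rw [← h, sub_right_comm]⟩
    · exact ⟨x + 1, by rw [cycleGraph_adj']; right; simpa using h₁, by rw [← h, add_sub_right_comm]⟩

theorem SimpleGraph.dist_pathGraph_boxProd_cycleGraph {m n : ℕ} (u v : Fin m × Fin (n + 1)) :
    (pathGraph m □ cycleGraph (n + 1)).dist u v = Nat.dist u.1 v.1 + cycleNorm (u.2 - v.2) := by
  rw [dist_boxProd_of_preconnected (pathGraph_preconnected m) cycleGraph_preconnected,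
    dist_pathGraph, dist_cycleGraph]

namespace PathCycleGrid

variable {m k : ℕ}

theorem two_mul_natCast_add_one : 2 * (k : Fin (2 * k + 1)) + 1 = 0 := by
  have h := natCast_self (2 * k + 1)
  push_cast at h
  exact h

theorem cycleNorm_one (hk : 1 ≤ k) : cycleNorm (1 : Fin (2 * k + 1)) = 1 := by
  simpa using cycleNorm_natCast (n := 2 * k + 1) (j := 1) (by omega)

theorem cycleNorm_natCast_sub_natCast {a b : ℕ} (h : Nat.dist a b ≤ k) :
    cycleNorm ((a : Fin (2 * k + 1)) - (b : Fin (2 * k + 1))) = Nat.dist a b := by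
  rcases le_total b a with hba | hab
  · rw [← Nat.cast_sub hba, cycleNorm_natCast] <;> simp only [Nat.dist] at * <;> omega
  · rw [cycleNorm_sub_comm, ← Nat.cast_sub hab, cycleNorm_natCast] <;>
      simp only [Nat.dist] at * <;> omega

theorem cycleNorm_line {ε : Fin (2 * k + 1)} (hε : ε = 1 ∨ ε = -1) (p : Fin (2 * k + 1))
    {a b : ℕ} (h : Nat.dist a b ≤ k) :
    cycleNorm (p + ε * (a : Fin (2 * k + 1)) - (p + ε * (b : Fin (2 * k + 1)))) = Nat.dist a b := by
  rcases hε with rfl | rfl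
  · simpa using cycleNorm_natCast_sub_natCast h
  · rw [show p + -1 * (a : Fin (2 * k + 1)) - (p + -1 * b) = -(a - b) by ring, cycleNorm_neg,
      cycleNorm_natCast_sub_natCast h]

theorem eq_or_eq_neg_of_cycleNorm_eq {e : Fin (2 * k + 1)} (he : cycleNorm e = k) :
    e = k ∨ e = -k := by
  have := e.isLt
  have hval : ((k : Fin (2 * k + 1)) : ℕ) = k := by rw [val_natCast, Nat.mod_eq_of_lt (by omega)]
  unfold cycleNorm at he
  rcases le_or_gt (e : ℕ) k with h | h
  · exact Or.inl (Fin.ext (by omega))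
  · have hval' : (((k + 1 : ℕ) : Fin (2 * k + 1)) : ℕ) = k + 1 := by
      rw [val_natCast, Nat.mod_eq_of_lt (by omega)]
    rw [show e = ((k + 1 : ℕ) : Fin (2 * k + 1)) from Fin.ext (by omega)]
    push_cast
    exact Or.inr (by linear_combination two_mul_natCast_add_one (k := k))

def RainbowFree (c : Fin m × Fin (2 * k + 1) → Fin 3) : Prop :=
  ¬ HasRainbow3AP (pathGraph m □ cycleGraph (2 * k + 1)) c

namespace RainbowFree

variable {c : Fin m × Fin (2 * k + 1) → Fin 3}

theorem elim (hc : RainbowFree c) {u v w : Fin m × Fin (2 * k + 1)}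
    (hd : Nat.dist u.1 v.1 + cycleNorm (u.2 - v.2) = Nat.dist v.1 w.1 + cycleNorm (v.2 - w.2))
    (huv : c u ≠ c v) (hvw : c v ≠ c w) (huw : c u ≠ c w) : False :=
  hc ⟨u, v, w, by simpa only [dist_pathGraph_boxProd_cycleGraph] using hd, huv, hvw, huw⟩

theorem eq_or_eq (hc : RainbowFree c) {u v w : Fin m × Fin (2 * k + 1)}
    (hd : Nat.dist u.1 v.1 + cycleNorm (u.2 - v.2) = Nat.dist v.1 w.1 + cycleNorm (v.2 - w.2))
    (huv : c u ≠ c v) : c w = c u ∨ c w = c v := by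
  by_contra! h
  exact hc.elim hd huv h.2.symm h.1.symm

theorem reflect (hc : RainbowFree c) {r r' : Fin m} {a : Fin (2 * k + 1)}
    (hrow : ∀ y, c (r', y) ≠ c (r, a)) (z : Fin (2 * k + 1)) :
    c (r', 2 * a - z) = c (r', z) := by
  refine (hc.eq_or_eq (u := (r', z)) (v := (r, a)) (w := (r', 2 * a - z)) ?_
    (hrow z)).resolve_right (hrow _)
  dsimp only
  rw [Nat.dist_comm, show a - (2 * a - z) = -(a - z) by ring, cycleNorm_neg, cycleNorm_sub_comm]

theorem false_of_run (hc : RainbowFree c) {r r' : Fin m} (hr : Nat.dist r r' = 1)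
    {ε : Fin (2 * k + 1)} (hε : ε = 1 ∨ ε = -1) (p : Fin (2 * k + 1)) {ρ : ℕ} (hρ : 1 ≤ ρ)
    (hρk : ρ + 1 ≤ k) {P Q R : Fin 3} (hPQ : P ≠ Q) (hQR : Q ≠ R) (hPR : P ≠ R)
    (hP : c (r, p) = P) (hQ : ∀ i : ℕ, 1 ≤ i → i ≤ ρ → c (r, p + ε * (i : Fin (2 * k + 1))) = Q)
    (hR : c (r, p + ε * ((ρ + 1 : ℕ) : Fin (2 * k + 1))) = R) : False := by
  set x : ℕ → Fin (2 * k + 1) := fun a => p + ε * a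
  have hx : ∀ a b, Nat.dist a b ≤ k → cycleNorm (x a - x b) = Nat.dist a b :=
    fun a b => cycleNorm_line hε p
  have hr' : Nat.dist r' r = 1 := Nat.dist_comm r' r ▸ hr
  have hP : c (r, x 0) = P := by simpa [x] using hP
  have hQ : ∀ i, 1 ≤ i → i ≤ ρ → c (r, x i) = Q := hQ
  have hR : c (r, x (ρ + 1)) = R := hR
  obtain rfl | hρ2 := eq_or_lt_of_le hρ
  · refine hc.elim (u := (r, x 0)) (v := (r, x 1)) (w := (r, x 2)) ?_ ?_ ?_ ?_
    · dsimp only; rw [hx, hx] <;> simp only [Nat.dist] <;> omega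
    all_goals simp only [hP, hQ 1 le_rfl le_rfl, hR]; omega
  -- `(r', x ρ)` is forced to be `R`, then `(r, x (2 * ρ))` to be `P`; then the AP
  -- `x 2, x (ρ + 1), x (2 * ρ)` in row `r` is rainbow
  have hQρ := hQ ρ (by omega) le_rfl
  have hRρ : c (r', x ρ) = R := by
    rcases eq_or_eq_or_eq_of_ne hPQ hQR hPR (c (r', x ρ)) with h | h | h
    · refine (hc.elim (u := (r, x (ρ + 1))) (v := (r, x ρ)) (w := (r', x ρ)) ?_ ?_ ?_ ?_).elim
      · dsimp only; rw [hx, hx, hr] <;> simp only [Nat.dist] <;> omega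
      all_goals simp only [hR, hQρ, h]; omega
    · refine (hc.elim (u := (r, x (ρ + 1))) (v := (r, x 0)) (w := (r', x ρ)) ?_ ?_ ?_ ?_).elim
      · dsimp only; rw [hx, hx, hr] <;> simp only [Nat.dist] <;> omega
      all_goals simp only [hR, hP, h]; omega
    · exact h
  have hP2ρ : c (r, x (2 * ρ)) = P := by
    rcases eq_or_eq_or_eq_of_ne hPQ hQR hPR (c (r, x (2 * ρ))) with h | h | h
    · exact h
    · refine (hc.elim (u := (r, x 0)) (v := (r', x ρ)) (w := (r, x (2 * ρ))) ?_ ?_ ?_ ?_).elim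
      · dsimp only; rw [hx, hx, hr, hr'] <;> simp only [Nat.dist] <;> omega
      all_goals simp only [hRρ, hP, h]; omega
    · refine (hc.elim (u := (r, x 0)) (v := (r, x ρ)) (w := (r, x (2 * ρ))) ?_ ?_ ?_ ?_).elim
      · dsimp only; rw [hx, hx] <;> simp only [Nat.dist] <;> omega
      all_goals simp only [hQρ, hP, h]; omega
  refine hc.elim (u := (r, x 2)) (v := (r, x (ρ + 1))) (w := (r, x (2 * ρ))) ?_ ?_ ?_ ?_
  · dsimp only; rw [hx, hx] <;> simp only [Nat.dist] <;> omega
  all_goals simp only [hQ 2 (by omega) (by omega), hR, hP2ρ]; omega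

-- Look at the first colour change after `x + ε`: either it is to a third colour, which is a run
-- as in `false_of_run`, or it is back to `c (r, x)`, which is a shorter instance of the claim.
theorem false_of_third_color_near_boundary (hc : RainbowFree c) {r r' : Fin m}
    (hr : Nat.dist r r' = 1) {ε : Fin (2 * k + 1)} (hε : ε = 1 ∨ ε = -1) {i : ℕ} (hi : 2 ≤ i)
    (hik : i ≤ k) (x : Fin (2 * k + 1)) (hx : c (r, x) ≠ c (r, x + ε))
    (hi₀ : c (r, x + ε * (i : Fin (2 * k + 1))) ≠ c (r, x))
    (hi₁ : c (r, x + ε * (i : Fin (2 * k + 1))) ≠ c (r, x + ε)) : False := by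
  induction i using Nat.strong_induction_on generalizing x with
  | _ i ih =>
  set f : ℕ → Fin 3 := fun j => c (r, x + ε * (j : Fin (2 * k + 1)))
  have hf₀ : f 0 = c (r, x) := by simp [f]
  have hf₁ : f 1 = c (r, x + ε) := by simp [f]
  have hshift : ∀ a b : ℕ, c (r, x + ε * (a : Fin (2 * k + 1)) + ε * (b : Fin (2 * k + 1))) =
      f (a + b) := fun a b => by simp only [f]; push_cast; ring_nf
  replace hx : f 0 ≠ f 1 := by rwa [hf₀, hf₁]
  replace hi₀ : f i ≠ f 0 := by rwa [hf₀]
  replace hi₁ : f i ≠ f 1 := by rwa [hf₁]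
  obtain ⟨t, ht₁, hti, hrun, hnext⟩ := Nat.exists_run_of_ne (f := f) (by omega : 1 ≤ i) hi₁
  by_cases hback : f (t + 1) = f 0
  · have hti' : t + 1 ≠ i := by
      rintro rfl
      exact hi₀ hback
    have hft : c (r, x + ε * (t : Fin (2 * k + 1))) = f 1 := hrun t ht₁ le_rfl
    have hft₁ : c (r, x + ε * (t : Fin (2 * k + 1)) + ε) = f 0 := by
      simpa [hback] using hshift t 1
    have hfi : c (r, x + ε * (t : Fin (2 * k + 1)) + ε * ((i - t : ℕ) : Fin (2 * k + 1))) =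
        f i := by
      rw [hshift, Nat.add_sub_cancel' (by omega)]
    exact ih (i - t) (by omega) (by omega) (by omega) _ (by rw [hft, hft₁]; exact hx.symm)
      (by rw [hfi, hft]; exact hi₁) (by rw [hfi, hft₁]; exact hi₀)
  · exact hc.false_of_run hr hε x ht₁ (by omega) hx (Ne.symm hnext) (Ne.symm hback) hf₀.symm
      hrun rfl

-- every other position is at most `k` steps past `x` or before `x + 1`
theorem eq_add_of_third_color (hc : RainbowFree c) {r r' : Fin m} (hr : Nat.dist r r' = 1)
    {x z : Fin (2 * k + 1)} (hx : c (r, x) ≠ c (r, x + 1)) (hz₀ : c (r, z) ≠ c (r, x))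
    (hz₁ : c (r, z) ≠ c (r, x + 1)) : z = x + ((k + 1 : ℕ) : Fin (2 * k + 1)) := by
  obtain ⟨t, ht, rfl⟩ : ∃ t : ℕ, t < 2 * k + 1 ∧ z = x + (t : Fin (2 * k + 1)) :=
    ⟨(z - x : Fin _), (z - x).isLt, by rw [cast_val_eq_self]; ring⟩
  have ht₀ : t ≠ 0 := by rintro rfl; simp at hz₀
  have ht₁ : t ≠ 1 := by rintro rfl; simp at hz₁
  by_contra htk
  have htk₁ : t ≠ k + 1 := by rintro rfl; exact htk rfl
  rcases le_or_gt t k with htk' | htk'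
  · exact hc.false_of_third_color_near_boundary hr (Or.inl rfl) (by omega) htk' x (by simpa)
      (by simpa) (by simpa)
  · have hback : x + 1 + -1 * ((2 * k + 2 - t : ℕ) : Fin (2 * k + 1)) = x + t := by
      rw [Nat.cast_sub (by omega)]
      push_cast
      linear_combination -two_mul_natCast_add_one (k := k)
    refine hc.false_of_third_color_near_boundary hr (Or.inr rfl) (i := 2 * k + 2 - t) (by omega)
      (by omega) (x + 1) ?_ ?_ ?_
    · simpa using hx.symm
    · rw [hback]; exact hz₁
    · rw [hback, add_neg_cancel_right]; exact hz₀

theorem false_of_row_surjective (hc : RainbowFree c) {r r' : Fin m} (hr : Nat.dist r r' = 1)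
    (hk : 1 ≤ k) (hrow : ∀ P, ∃ y, c (r, y) = P) : False := by
  obtain ⟨y₀, hy₀⟩ := hrow 0
  obtain ⟨y₁, hy₁⟩ := hrow 1
  obtain ⟨x, hx⟩ := exists_ne_add_one (f := fun y => c (r, y)) (a := y₀) (b := y₁)
    (by simp [hy₀, hy₁])
  obtain ⟨C, hC₀, hC₁⟩ := exists_ne_and_ne (c (r, x)) (c (r, x + 1))
  have hCpos : ∀ w, c (r, w) = C → w = x + ((k + 1 : ℕ) : Fin (2 * k + 1)) := fun w hw =>
    hc.eq_add_of_third_color hr hx (hw ▸ hC₀) (hw ▸ hC₁)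
  obtain ⟨z, hz⟩ := hrow C
  have hzx := hCpos z hz
  obtain rfl | hk₂ := eq_or_lt_of_le hk
  · refine hc.elim (u := (r, x)) (v := (r, x + 1)) (w := (r, z)) ?_ hx (hz ▸ hC₁.symm)
      (hz ▸ hC₀.symm)
    dsimp only
    rw [hzx, show x - (x + 1) = -1 by ring,
      show x + 1 - (x + ((1 + 1 : ℕ) : Fin 3)) = -1 by push_cast; ring]
  have hone : (1 : Fin (2 * k + 1)) ≠ 0 := by
    simpa using natCast_ne_zero_of_lt (n := 2 * k + 1) (j := 1) (by omega) (by omega)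
  have hzp : c (r, z + 1) ≠ C := fun h => hone (by linear_combination hCpos _ h - hzx)
  have hzm : c (r, z - 1) ≠ C := fun h => hone (by linear_combination hzx - hCpos _ h)
  -- the third colours of the colour changes on either side of `z` sit at `z + (k + 1)` and `z + k`
  have hplus : ∀ w, c (r, w) ≠ C → c (r, w) ≠ c (r, z + 1) →
      w = z + ((k + 1 : ℕ) : Fin (2 * k + 1)) := fun w h₀ h₁ =>
    hc.eq_add_of_third_color hr (hz ▸ hzp.symm) (hz ▸ h₀) h₁
  have hminus : ∀ w, c (r, w) ≠ c (r, z - 1) → c (r, w) ≠ C →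
      w = z - 1 + ((k + 1 : ℕ) : Fin (2 * k + 1)) := fun w h₀ h₁ =>
    hc.eq_add_of_third_color hr (by rwa [sub_add_cancel, hz]) h₀ (by rwa [sub_add_cancel, hz])
  by_cases hD : c (r, z - 1) = c (r, z + 1)
  · obtain ⟨E, hE₀, hE₁⟩ := exists_ne_and_ne C (c (r, z + 1))
    obtain ⟨w, hw⟩ := hrow E
    have h₁ := hplus w (hw ▸ hE₀) (hw ▸ hE₁)
    have h₂ := hminus w (by rw [hD, hw]; exact hE₁) (hw ▸ hE₀)
    exact hone (by linear_combination h₂ - h₁)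
  · have h := hplus (z - 1) hzm hD
    exact natCast_ne_zero_of_lt (n := 2 * k + 1) (j := k + 2) (by omega) (by omega)
      (by push_cast at h ⊢; linear_combination -h)

theorem false_of_two_rows (hc : RainbowFree c) (hk : 1 ≤ k) {r₀ r₁ : Fin m}
    (hr : Nat.dist r₀ r₁ = 1) {A B C : Fin 3} (hAB : A ≠ B) (hBC : B ≠ C) (hAC : A ≠ C)
    (h₀ : ∀ y, c (r₀, y) ≠ B) (h₁ : ∀ y, c (r₁, y) ≠ A) {a b : Fin (2 * k + 1)}
    (ha : c (r₀, a) = A) (hb : c (r₁, b) = B)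
    (hC : (∃ y, c (r₀, y) = C) ∨ ∃ y, c (r₁, y) = C) : False := by
  have hr' : Nat.dist r₁ r₀ = 1 := Nat.dist_comm r₁ r₀ ▸ hr
  have hstep : ∀ q, c (r₀, q) = A ∧ c (r₁, q) = B → c (r₀, q + 1) = A ∧ c (r₁, q + 1) = B := by
    rintro q ⟨hq₀, hq₁⟩
    have hd : ∀ s s' : Fin m, Nat.dist s s' = 1 →
        Nat.dist s' s + cycleNorm (q - q) = Nat.dist s s + cycleNorm (q - (q + 1)) := by
      intro s s' h
      rw [Nat.dist_comm, h, sub_self, show q - (q + 1) = -1 by ring, cycleNorm_neg,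
        cycleNorm_one hk, Nat.dist_self, cycleNorm_zero]
    exact ⟨((hc.eq_or_eq (u := (r₁, q)) (v := (r₀, q)) (w := (r₀, q + 1)) (hd r₀ r₁ hr)
        (by rw [hq₀, hq₁]; exact hAB.symm)).resolve_left (hq₁ ▸ h₀ _)).trans hq₀,
      ((hc.eq_or_eq (u := (r₀, q)) (v := (r₁, q)) (w := (r₁, q + 1)) (hd r₁ r₀ hr')
        (by rw [hq₀, hq₁]; exact hAB)).resolve_left (hq₀ ▸ h₁ _)).trans hq₁⟩
  have hcolumn : ¬ (c (r₀, a) = A ∧ c (r₁, a) = B) := by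
    intro h
    have hall := forall_of_forall_add_one hstep h
    rcases hC with ⟨y, hy⟩ | ⟨y, hy⟩
    · exact hAC ((hall y).1.symm.trans hy)
    · exact hBC ((hall y).2.symm.trans hy)
  -- the reflections through `a` and through `2 * b - a` compose to a translation by `4 * (b - a)`
  have hshift : ∀ s, c (r₁, s) = B → c (r₁, s + 4 * (b - a)) = B := by
    intro s hs
    have hs' := hc.reflect (ha ▸ h₁) s
    have ha' := hc.reflect (hb ▸ h₀) a
    have hs'' := hc.reflect (r := r₀) (a := 2 * b - a) (by rw [ha', ha]; exact h₁) (2 * a - s)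
    rwa [show 2 * (2 * b - a) - (2 * a - s) = s + 4 * (b - a) by ring, hs', hs] at hs''
  have hinv : ((k * (k + 1) : ℕ) : Fin (2 * k + 1)) * 4 = -1 := by
    push_cast
    linear_combination (2 * (k : Fin (2 * k + 1)) + 1) * two_mul_natCast_add_one (k := k)
  refine hcolumn ⟨ha, ?_⟩
  have := add_natCast_mul_of_forall hshift hb (k * (k + 1))
  rwa [show b + ((k * (k + 1) : ℕ) : Fin (2 * k + 1)) * (4 * (b - a)) = a by
    linear_combination (b - a) * hinv] at this

theorem false_of_strip (hc : RainbowFree c) (hk : 1 ≤ k) {r₀ r₁ : Fin m}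
    (hr : (r₀ : ℕ) + 2 ≤ r₁) {A B C : Fin 3} (hAB : A ≠ B) (hBC : B ≠ C) (hAC : A ≠ C)
    (h₀ : ∀ y, c (r₀, y) ≠ B) (h₁ : ∀ y, c (r₁, y) ≠ A)
    (hint : ∀ r : Fin m, (r₀ : ℕ) < r → (r : ℕ) < r₁ → ∀ y, c (r, y) = C)
    {p q : Fin (2 * k + 1)} (hp : c (r₀, p) = A) (hq : c (r₁, q) = B) : False := by
  -- an `A` and a `B` fewer than `k` columns apart form an AP with a vertex in the row above `r₁`
  have hclose : ∀ p' q', c (r₀, p') = A → c (r₁, q') = B → cycleNorm (q' - p') < k → False := by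
    intro p' q' hp' hq' hlt
    set e := cycleNorm (q' - p')
    have hC := hint ⟨r₁ - 1, by omega⟩ (by dsimp only; omega) (by dsimp only; omega)
      (p' + ((e + 1 : ℕ) : Fin (2 * k + 1)))
    refine hc.elim (u := (⟨r₁ - 1, by omega⟩, p' + ((e + 1 : ℕ) : Fin (2 * k + 1))))
      (v := (r₀, p')) (w := (r₁, q')) ?_ (by rw [hC, hp']; exact hAC.symm)
      (by rw [hp', hq']; exact hAB) (by rw [hC, hq']; exact hBC.symm)
    dsimp only
    rw [add_sub_cancel_left, cycleNorm_natCast (by omega), cycleNorm_sub_comm]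
    simp only [Nat.dist]
    omega
  by_cases hpq : cycleNorm (q - p) < k
  · exact hclose p q hp hq hpq
  -- otherwise `q = p ± k`, and reflecting through `(r₀, p)` shows that `p + k` and `p - k` are `B`
  have hqp : cycleNorm (q - p) = k :=
    le_antisymm (by have := cycleNorm_le_half (q - p); omega) (not_lt.1 hpq)
  have hrefl := hc.reflect (hp ▸ h₁) q
  have hB : c (r₁, p + k) = B ∧ c (r₁, p - k) = B := by
    rcases eq_or_eq_neg_of_cycleNorm_eq hqp with h | h
    · rw [show q = p + k by linear_combination h] at hq hrefl
      rw [show 2 * p - (p + k) = p - k by ring] at hrefl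
      exact ⟨hq, hrefl.trans hq⟩
    · rw [show q = p - k by linear_combination h] at hq hrefl
      rw [show 2 * p - (p - k) = p + k by ring] at hrefl
      exact ⟨hrefl.trans hq, hq⟩
  by_cases hA : c (r₀, p - 1) = A
  · refine hclose (p - 1) (p - k) hA hB.2 ?_
    rw [show p - k - (p - 1) = -((k - 1 : ℕ) : Fin (2 * k + 1)) by rw [Nat.cast_sub hk]; ring,
      cycleNorm_neg, cycleNorm_natCast (by omega)]
    omega
  · have hC : c (r₀, p - 1) = C :=
      ((eq_or_eq_or_eq_of_ne hAB hBC hAC _).resolve_left hA).resolve_left (h₀ _)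
    refine hc.elim (u := (r₀, p - 1)) (v := (r₁, p + k)) (w := (r₀, p)) ?_
      (by rw [hC, hB.1]; exact hBC.symm) (by rw [hB.1, hp]; exact hAB.symm)
      (by rw [hC, hp]; exact hAC.symm)
    dsimp only
    rw [show p - 1 - (p + k) = p + k - p by linear_combination -two_mul_natCast_add_one (k := k),
      Nat.dist_comm]

theorem exists_dist_eq_one (hm : 2 ≤ m) (r : Fin m) : ∃ r' : Fin m, Nat.dist r r' = 1 := by
  rcases lt_or_ge ((r : ℕ) + 1) m with h | h
  · exact ⟨⟨r + 1, h⟩, by simp [Nat.dist]⟩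
  · exact ⟨⟨r - 1, by omega⟩, by simp only [Nat.dist]; omega⟩

theorem false_of_window (hc : RainbowFree c) (hm : 2 ≤ m) (hk : 1 ≤ k) (w : ℕ) :
    ∀ lo, lo + w < m →
      (∀ P, ∃ v : Fin m × Fin (2 * k + 1), c v = P ∧ lo ≤ (v.1 : ℕ) ∧ (v.1 : ℕ) ≤ lo + w) →
      False := by
  have hrow : ∀ (v : Fin m × Fin (2 * k + 1)) (r : Fin m), (v.1 : ℕ) = r → c (r, v.2) = c v :=
    fun v r h => by rw [show (r, v.2) = v from Prod.ext (Fin.ext h.symm) rfl]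
  induction w with
  | zero =>
    intro lo hlo hwin
    obtain ⟨r', hr'⟩ := exists_dist_eq_one hm ⟨lo, by omega⟩
    refine hc.false_of_row_surjective hr' hk fun P => ?_
    obtain ⟨v, hv, h₁, h₂⟩ := hwin P
    exact ⟨v.2, (hrow v _ (by dsimp only; omega)).trans hv⟩
  | succ w ih =>
    intro lo hlo hwin
    by_cases hup : ∀ P, ∃ v : Fin m × Fin (2 * k + 1), c v = P ∧ lo + 1 ≤ (v.1 : ℕ) ∧
        (v.1 : ℕ) ≤ lo + 1 + w
    · exact ih (lo + 1) (by omega) hup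
    by_cases hdown : ∀ P, ∃ v : Fin m × Fin (2 * k + 1), c v = P ∧ lo ≤ (v.1 : ℕ) ∧
        (v.1 : ℕ) ≤ lo + w
    · exact ih lo (by omega) hdown
    -- by minimality `X` occurs only in row `lo` and `Y` only in row `lo + (w + 1)`
    push Not at hup hdown
    obtain ⟨X, hX⟩ := hup
    obtain ⟨Y, hY⟩ := hdown
    set r₀ : Fin m := ⟨lo, by omega⟩
    set r₁ : Fin m := ⟨lo + (w + 1), hlo⟩
    obtain ⟨vX, hvX, hvX₁, hvX₂⟩ := hwin X
    obtain ⟨vY, hvY, hvY₁, hvY₂⟩ := hwin Y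
    have hX₀ : c (r₀, vX.2) = X := by
      rw [hrow vX r₀ (by have := hX vX hvX; dsimp [r₀]; omega), hvX]
    have hY₁ : c (r₁, vY.2) = Y := by
      rw [hrow vY r₁ (by have := hY vY hvY hvY₁; dsimp [r₁]; omega), hvY]
    have h₀ : ∀ y, c (r₀, y) ≠ Y := fun y h => by have := hY _ h; dsimp [r₀] at this; omega
    have h₁ : ∀ y, c (r₁, y) ≠ X := fun y h => by have := hX _ h; dsimp [r₁] at this; omega
    have hXY : X ≠ Y := fun h => h₀ _ (h ▸ hX₀)
    obtain ⟨Z, hZX, hZY⟩ := exists_ne_and_ne X Y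
    rcases Nat.eq_zero_or_pos w with rfl | hw
    · refine hc.false_of_two_rows hk (r₀ := r₀) (r₁ := r₁) (by simp [r₀, r₁, Nat.dist]) hXY
        hZY.symm hZX.symm h₀ h₁ hX₀ hY₁ ?_
      obtain ⟨v, hv, hv₁, hv₂⟩ := hwin Z
      rcases Nat.lt_or_ge (v.1 : ℕ) (lo + 1) with h | h
      · exact Or.inl ⟨v.2, (hrow v r₀ (by dsimp [r₀]; omega)).trans hv⟩
      · exact Or.inr ⟨v.2, (hrow v r₁ (by dsimp [r₁]; omega)).trans hv⟩
    · refine hc.false_of_strip hk (r₀ := r₀) (r₁ := r₁) (by dsimp [r₀, r₁]; omega) hXY hZY.symm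
        hZX.symm h₀ h₁ (fun r hr₀ hr₁ y => ?_) hX₀ hY₁
      rcases eq_or_eq_or_eq_of_ne hXY hZY.symm hZX.symm (c (r, y)) with h | h | h
      · have := hX _ h; dsimp [r₀, r₁] at *; omega
      · have := hY _ h; dsimp [r₀, r₁] at *; omega
      · exact h

end RainbowFree

theorem hasRainbow3AP_of_surjective (hm : 2 ≤ m) (hk : 1 ≤ k)
    {c : Fin m × Fin (2 * k + 1) → Fin 3} (hsurj : Function.Surjective c) :
    HasRainbow3AP (pathGraph m □ cycleGraph (2 * k + 1)) c := by
  by_contra hc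
  refine RainbowFree.false_of_window hc hm hk (m - 1) 0 (by omega) fun P => ?_
  obtain ⟨v, hv⟩ := hsurj P
  exact ⟨v, hv, by omega, by omega⟩

end PathCycleGrid

theorem stmt_8 (m k : ℕ) (hm : 2 ≤ m) (hk : 1 ≤ k) :
    aw (pathGraph m □ cycleGraph (2 * k + 1)) = 3 := by
  have hthree : 3 ∈ {r : ℕ | 0 < r ∧ ∀ c : Fin m × Fin (2 * k + 1) → Fin r,
      Function.Surjective c → HasRainbow3AP (pathGraph m □ cycleGraph (2 * k + 1)) c} :=
    ⟨by norm_num, fun _ => PathCycleGrid.hasRainbow3AP_of_surjective hm hk⟩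
  refine le_antisymm (Nat.sInf_le hthree) (le_csInf ⟨3, hthree⟩ ?_)
  rintro r ⟨hr, hrainbow⟩
  by_contra! hr₃
  -- colour row `i` with `min i (r - 1)`: surjective since `r ≤ 2 ≤ m`
  refine (hrainbow (fun v => ⟨min v.1 (r - 1), by omega⟩) fun j => ?_).three_le.not_gt hr₃
  exact ⟨(⟨j, by omega⟩, 0), Fin.ext (by simp; omega)⟩
end
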